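/- Let E be a real inner product space and let u, v ∈ E be nonzero with u ≠ v. Write a = ‖u‖², c = ‖v‖², and cos φ = ⟨u, v⟩/(‖u‖·‖v‖), and let β* = (c − √(a·c)·cos φ)/(a + c − 2·√(a·c)·cos φ). Then for any η ≥ 0, the approximate loss change with the optimal weight satisfies −η·‖β*·u + (1−β*)·v‖² = −η·(a·c·(1 − cos²φ))/(a + c − 2·√(a·c)·cos φ); equivalently, −η·[(β*)²·a + (1−β*)²·c + 2·β*·(1−β*)·√(a·c)·cos φ] equals −η·(a·c − a·c·cos²φ)/(a + c − 2·√(a·c)·cos φ). -/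

import Mathlib

/-!
Write `t = ⟪u, v⟫ = √(a c) cos φ` and `D = a + c - 2 t = ‖u - v‖²`, which is nonzero since `u ≠ v`.
Expanding the norm, `‖β u + (1 - β) v‖² = β² a + (1 - β)² c + 2 β (1 - β) t` is a quadratic in `β`
with leading coefficient `D`; at its minimiser `β* = (c - t) / D` it takes the value
`(a c - t²) / D`, and `t² = a c cos² φ`.
-/

open InnerProductGeometry RealInnerProductSpace

theorem norm_smul_add_one_sub_smul_sq {E : Type*} [NormedAddCommGroup E]
    [InnerProductSpace ℝ E] (u v : E) (β : ℝ) :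
    ‖β • u + (1 - β) • v‖ ^ 2 =
      β ^ 2 * ‖u‖ ^ 2 + (1 - β) ^ 2 * ‖v‖ ^ 2 + 2 * β * (1 - β) * ⟪u, v⟫ := by
  rw [norm_add_sq_real, norm_smul, norm_smul, real_inner_smul_left, real_inner_smul_right,
    mul_pow, mul_pow, Real.norm_eq_abs, Real.norm_eq_abs, sq_abs, sq_abs]
  ring

theorem norm_sq_add_norm_sq_sub_two_mul_inner_ne_zero {E : Type*} [NormedAddCommGroup E]
    [InnerProductSpace ℝ E] {u v : E} (huv : u ≠ v) :
    ‖u‖ ^ 2 + ‖v‖ ^ 2 - 2 * ⟪u, v⟫ ≠ 0 := by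
  have hsub : ‖u‖ ^ 2 + ‖v‖ ^ 2 - 2 * ⟪u, v⟫ = ‖u - v‖ ^ 2 := by rw [norm_sub_sq_real]; ring
  rw [hsub]
  exact pow_ne_zero 2 (norm_ne_zero_iff.mpr (sub_ne_zero.mpr huv))

theorem convex_comb_quadratic_at_argmin {a c t β : ℝ} (hD : a + c - 2 * t ≠ 0)
    (hβ : β = (c - t) / (a + c - 2 * t)) :
    β ^ 2 * a + (1 - β) ^ 2 * c + 2 * β * (1 - β) * t = (a * c - t ^ 2) / (a + c - 2 * t) := by
  have hD' : a + c - t * 2 ≠ 0 := by rwa [mul_comm]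
  subst hβ
  field_simp
  ring

theorem loss_change_at_optimal_weight_general
    {E : Type*} [NormedAddCommGroup E] [InnerProductSpace ℝ E]
    (u v : E) (huv : u ≠ v)
    (a c cosφ βs : ℝ)
    (ha : a = ‖u‖ ^ 2) (hc : c = ‖v‖ ^ 2)
    (hcos : cosφ = (inner ℝ u v : ℝ) / (‖u‖ * ‖v‖))
    (hβs : βs = (c - Real.sqrt (a * c) * cosφ) /
      (a + c - 2 * Real.sqrt (a * c) * cosφ)) :
    ∀ η : ℝ, 0 ≤ η →
      (-η * ‖βs • u + (1 - βs) • v‖ ^ 2 =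
        -η * (a * c * (1 - cosφ ^ 2)) /
          (a + c - 2 * Real.sqrt (a * c) * cosφ)) ∧
      (-η * (βs ^ 2 * a + (1 - βs) ^ 2 * c +
          2 * βs * (1 - βs) * Real.sqrt (a * c) * cosφ) =
        -η * (a * c - a * c * cosφ ^ 2) /
          (a + c - 2 * Real.sqrt (a * c) * cosφ)) := by
  intro η _
  rw [← cos_angle] at hcos
  have hsqrt : Real.sqrt (a * c) = ‖u‖ * ‖v‖ := by
    rw [ha, hc, ← mul_pow, Real.sqrt_sq (by positivity)]
  have hinner : Real.sqrt (a * c) * cosφ = ⟪u, v⟫ := by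
    rw [hsqrt, hcos, mul_comm, cos_angle_mul_norm_mul_norm]
  have hinner_sq : a * c * cosφ ^ 2 = ⟪u, v⟫ ^ 2 := by
    rw [← hinner, mul_pow, Real.sq_sqrt (by rw [ha, hc]; positivity)]
  simp only [mul_assoc _ (Real.sqrt (a * c)) cosφ, hinner] at hβs ⊢
  have hD : a + c - 2 * ⟪u, v⟫ ≠ 0 := ha ▸ hc ▸ norm_sq_add_norm_sq_sub_two_mul_inner_ne_zero huv
  have hvalue := convex_comb_quadratic_at_argmin hD hβs
  rw [norm_smul_add_one_sub_smul_sq, ← ha, ← hc, hvalue, mul_one_sub (a * c), hinner_sq]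
  exact ⟨(mul_div_assoc _ _ _).symm, (mul_div_assoc _ _ _).symm⟩

/-- Approximate loss change at the optimal weight: for nonzero `u ≠ v` with `a = ‖u‖²`,
`c = ‖v‖²`, `cos φ = ⟨u,v⟩/(‖u‖·‖v‖)` and
`β* = (c − √(a·c)·cos φ)/(a + c − 2·√(a·c)·cos φ)`, for any `η ≥ 0`,
`−η·‖β*·u + (1−β*)·v‖² = −η·(a·c·(1 − cos²φ))/(a + c − 2·√(a·c)·cos φ)`, and equivalently
`−η·[(β*)²·a + (1−β*)²·c + 2β*(1−β*)·√(a·c)·cos φ]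
  = −η·(a·c − a·c·cos²φ)/(a + c − 2·√(a·c)·cos φ)`. -/
theorem loss_change_at_optimal_weight
    {E : Type*} [NormedAddCommGroup E] [InnerProductSpace ℝ E]
    (u v : E) (hu : u ≠ 0) (hv : v ≠ 0) (huv : u ≠ v)
    (a c cosφ βs : ℝ)
    (ha : a = ‖u‖ ^ 2) (hc : c = ‖v‖ ^ 2)
    (hcos : cosφ = (inner ℝ u v : ℝ) / (‖u‖ * ‖v‖))
    (hβs : βs = (c - Real.sqrt (a * c) * cosφ) /
      (a + c - 2 * Real.sqrt (a * c) * cosφ)) :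
    ∀ η : ℝ, 0 ≤ η →
      (-η * ‖βs • u + (1 - βs) • v‖ ^ 2 =
        -η * (a * c * (1 - cosφ ^ 2)) /
          (a + c - 2 * Real.sqrt (a * c) * cosφ)) ∧
      (-η * (βs ^ 2 * a + (1 - βs) ^ 2 * c +
          2 * βs * (1 - βs) * Real.sqrt (a * c) * cosφ) =
        -η * (a * c - a * c * cosφ ^ 2) /
          (a + c - 2 * Real.sqrt (a * c) * cosφ)) :=
  loss_change_at_optimal_weight_general u v huv a c cosφ βs ha hc hcos hβs
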